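/- With the setup above, the tangent curve satisfies the identity Ω(t) U₀†(t)(cosΦ(t) σₓ + sinΦ(t) σ_y)U₀(t) = −(T(t) × T'(t))·σ, where T(t)·σ = U₀†(t) σ_z U₀(t). -/

import Mathlib

open intervalIntegral Matrix Complex

/-- Cross product in ℝ³. -/
def cross3 (v w : Fin 3 → ℝ) : Fin 3 → ℝ :=
  ![v 1 * w 2 - v 2 * w 1, v 2 * w 0 - v 0 * w 2, v 0 * w 1 - v 1 * w 0]

/-- Pauli matrices. -/
def σx : Matrix (Fin 2) (Fin 2) ℂ := !![0, 1; 1, 0]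
def σy : Matrix (Fin 2) (Fin 2) ℂ := !![0, -Complex.I; Complex.I, 0]
def σz : Matrix (Fin 2) (Fin 2) ℂ := !![1, 0; 0, -1]

/-- The control Hamiltonian
`H₀(t) = (Ω/2)(cosΦ σx + sinΦ σy) + (Δ/2) σz`. -/
noncomputable def H0 (Ω Φ Δ : ℝ → ℝ) (t : ℝ) : Matrix (Fin 2) (Fin 2) ℂ :=
  (Ω t / 2) • (Real.cos (Φ t) • σx + Real.sin (Φ t) • σy) + (Δ t / 2) • σz

/-! The Heisenberg equation gives `T'·σ = U₀† (i[H₀, σz]) U₀`, and conjugation by the unitary `U₀`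
preserves commutators, so `[T·σ, T'·σ] = U₀† [σz, i[H₀, σz]] U₀ = -2iΩ U₀† (cos Φ σx + sin Φ σy) U₀`.
Comparing with `[a·σ, b·σ] = 2i (a × b)·σ` and cancelling `2i` gives the identity. -/

-- Derivatives do not depend on the choice of norm; this one makes matrices a normed algebra,
-- so that the product rule applies.
attribute [local instance] Matrix.linftyOpNormedAddCommGroup Matrix.linftyOpNormedSpace
  Matrix.linftyOpNormedRing Matrix.linftyOpNormedAlgebra

theorem HasDerivAt.matrix_conjTranspose {m n : Type*} [Fintype m] [Fintype n]
    {U : ℝ → Matrix m n ℂ} {U' : Matrix m n ℂ} {t : ℝ} (h : HasDerivAt U U' t) :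
    HasDerivAt (fun s ↦ (U s)ᴴ) U'ᴴ t :=
  hasDerivAt_pi.2 fun i ↦ hasDerivAt_pi.2 fun j ↦ (hasDerivAt_pi.1 (hasDerivAt_pi.1 h j) i).star

theorem hasDerivAt_conjTranspose_mul_mul {n : Type*} [Fintype n] [DecidableEq n]
    {U : ℝ → Matrix n n ℂ} {H : Matrix n n ℂ} {t : ℝ} (hH : H.IsHermitian)
    (hU : HasDerivAt U (-I • (H * U t)) t) (A : Matrix n n ℂ) :
    HasDerivAt (fun s ↦ (U s)ᴴ * A * U s) ((U t)ᴴ * (I • ⁅H, A⁆) * U t) t := by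
  refine ((hU.matrix_conjTranspose.mul_const A).fun_mul hU).congr_deriv ?_
  simp only [neg_smul, conjTranspose_neg, conjTranspose_smul, conjTranspose_mul, hH.eq,
    Complex.star_def, conj_I, neg_neg, Ring.lie_def, Matrix.mul_sub, Matrix.sub_mul,
    Matrix.mul_smul, Matrix.smul_mul, Matrix.mul_neg, smul_sub, Matrix.mul_assoc]
  abel

theorem lie_conjTranspose_mul_mul {n α : Type*} [Fintype n] [DecidableEq n] [Ring α] [Star α]
    {U : Matrix n n α} (hU : U * Uᴴ = 1) (A B : Matrix n n α) :
    ⁅Uᴴ * A * U, Uᴴ * B * U⁆ = Uᴴ * ⁅A, B⁆ * U := by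
  have hcancel (M : Matrix n n α) : U * (Uᴴ * M) = M := by
    rw [← Matrix.mul_assoc, hU, Matrix.one_mul]
  simp only [Ring.lie_def, Matrix.mul_sub, Matrix.sub_mul, Matrix.mul_assoc, hcancel]

noncomputable def pauliDot (a : Fin 3 → ℝ) : Matrix (Fin 2) (Fin 2) ℂ :=
  a 0 • σx + a 1 • σy + a 2 • σz

theorem HasDerivAt.pauliDot {a : ℝ → Fin 3 → ℝ} {a' : Fin 3 → ℝ} {t : ℝ}
    (h : HasDerivAt a a' t) : HasDerivAt (fun s ↦ pauliDot (a s)) (pauliDot a') t :=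
  (((hasDerivAt_pi.1 h 0).smul_const σx).add ((hasDerivAt_pi.1 h 1).smul_const σy)).add
    ((hasDerivAt_pi.1 h 2).smul_const σz)

theorem lie_pauliDot (a b : Fin 3 → ℝ) :
    ⁅pauliDot a, pauliDot b⁆ = (2 * I) • pauliDot (cross3 a b) := by
  ext i j
  fin_cases i <;> fin_cases j <;> simp [pauliDot, σx, σy, σz, cross3, Ring.lie_def] <;>
    grind [I_sq]

theorem isHermitian_H0 (Ω Φ Δ : ℝ → ℝ) (t : ℝ) : (H0 Ω Φ Δ t).IsHermitian := by
  ext i j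
  fin_cases i <;> fin_cases j <;> simp [H0, σx, σy, σz, Complex.ext_iff]

theorem lie_σz_lie_H0_σz (Ω Φ Δ : ℝ → ℝ) (t : ℝ) :
    ⁅σz, I • ⁅H0 Ω Φ Δ t, σz⁆⁆
      = (-2 * I) • (Ω t • (Real.cos (Φ t) • σx + Real.sin (Φ t) • σy)) := by
  ext i j
  fin_cases i <;> fin_cases j <;> simp [H0, σx, σy, σz, Ring.lie_def] <;> grind [I_sq]

theorem stmt_15_general (Ω Φ Δ : ℝ → ℝ)
    (U0 : ℝ → Matrix (Fin 2) (Fin 2) ℂ)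
    (hU0unitary : ∀ t : ℝ, (U0 t)ᴴ * U0 t = 1)
    (hU0ode : ∀ (i j : Fin 2) (t : ℝ), HasDerivAt (fun t' => U0 t' i j)
      (((-Complex.I) • (H0 Ω Φ Δ t * U0 t)) i j) t)
    (T : ℝ → (Fin 3 → ℝ)) (hTdiff : Differentiable ℝ T)
    (hT : ∀ t : ℝ, (T t 0) • σx + (T t 1) • σy + (T t 2) • σz =
      (U0 t)ᴴ * σz * U0 t) :
    ∀ t : ℝ,
      (Ω t) • ((U0 t)ᴴ * (Real.cos (Φ t) • σx + Real.sin (Φ t) • σy) * U0 t)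
        = -((cross3 (T t) (deriv T t) 0) • σx
            + (cross3 (T t) (deriv T t) 1) • σy
            + (cross3 (T t) (deriv T t) 2) • σz) := by
  intro t
  set H := H0 Ω Φ Δ t
  set U := U0 t
  have hpauliT (s : ℝ) : pauliDot (T s) = (U0 s)ᴴ * σz * U0 s := hT s
  have hU : HasDerivAt U0 (-I • (H * U)) t :=
    hasDerivAt_pi.2 fun i ↦ hasDerivAt_pi.2 fun j ↦ hU0ode i j t
  have hpauliT' : pauliDot (deriv T t) = Uᴴ * (I • ⁅H, σz⁆) * U := by
    refine (hTdiff t).hasDerivAt.pauliDot.unique ?_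
    rw [funext hpauliT]
    exact hasDerivAt_conjTranspose_mul_mul (isHermitian_H0 Ω Φ Δ t) hU σz
  have hUU : U * Uᴴ = 1 := mul_eq_one_comm.mp (hU0unitary t)
  have hlie : (2 * I) • pauliDot (cross3 (T t) (deriv T t))
      = (2 * I) • -(Ω t • (Uᴴ * (Real.cos (Φ t) • σx + Real.sin (Φ t) • σy) * U)) := by
    rw [← lie_pauliDot, hpauliT', hpauliT, lie_conjTranspose_mul_mul hUU, lie_σz_lie_H0_σz]
    simp only [Matrix.mul_smul, Matrix.smul_mul, mul_neg, neg_mul, neg_smul, smul_neg]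
  show _ = -pauliDot (cross3 (T t) (deriv T t))
  rw [smul_right_injective _ (mul_ne_zero two_ne_zero I_ne_zero) hlie, neg_neg]

/-- with `T(t)·σ = U₀†(t) σz U₀(t)`, the driving part of the
conjugated Hamiltonian satisfies
`Ω U₀†(cosΦ σx + sinΦ σy)U₀ = −(T × T')·σ`. -/
theorem stmt_15 (Ω Φ Δ : ℝ → ℝ) (hΩ : Continuous Ω) (hΦ : Continuous Φ)
    (hΔ : Continuous Δ)
    (U0 : ℝ → Matrix (Fin 2) (Fin 2) ℂ) (hU00 : U0 0 = 1)
    (hU0unitary : ∀ t : ℝ, (U0 t)ᴴ * U0 t = 1)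
    (hU0ode : ∀ (i j : Fin 2) (t : ℝ), HasDerivAt (fun t' => U0 t' i j)
      (((-Complex.I) • (H0 Ω Φ Δ t * U0 t)) i j) t)
    (T : ℝ → (Fin 3 → ℝ)) (hTdiff : Differentiable ℝ T)
    (hT : ∀ t : ℝ, (T t 0) • σx + (T t 1) • σy + (T t 2) • σz =
      (U0 t)ᴴ * σz * U0 t) :
    ∀ t : ℝ,
      (Ω t) • ((U0 t)ᴴ * (Real.cos (Φ t) • σx + Real.sin (Φ t) • σy) * U0 t)
        = -((cross3 (T t) (deriv T t) 0) • σx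
            + (cross3 (T t) (deriv T t) 1) • σy
            + (cross3 (T t) (deriv T t) 2) • σz) :=
  stmt_15_general Ω Φ Δ U0 hU0unitary hU0ode T hTdiff hT
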